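/- There is a constant C = C(N,Ω) depending only on N and Ω such that for every ε ∈ (0,1], every p ∈ [2,∞), every Borel control σ : closure(Ω) → S^{N−1} and every starting point x₀ ∈ Ω_ε, the exit time satisfies ε²·E^{x₀}_σ[τ_σ] ≤ C; in particular P^{x₀}_σ(τ_σ < ∞) = 1, i.e. the process exits into Γ_ε almost surely. -/

import Mathlib

/-!
Let `closure Ω ⊆ closedBall 0 R` and `M = (R + 1)²`. The function
`φ y = 8 (M - ‖y‖²) / ε²` is nonnegative on `Ω_ε` and, from every point of `closure Ω`,
decreases by at least `1` in mean along one step of the chain: the uniform step in `B_ε(x)`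
raises `‖·‖²` on average by at least `ε²/8`, the jump to `x ± ε σ(x)` by exactly `ε²`.
Summing this drift inequality along the chain gives `∑ₙ P(τ > n) ≤ φ(x₀) ≤ 8M/ε²`, and
`E τ = ∑ₙ P(τ > n)`.
-/

open MeasureTheory Metric Set
open scoped ENNReal NNReal Classical

noncomputable section

abbrev EucN (N : ℕ) := EuclideanSpace ℝ (Fin N)

variable {N : ℕ}

/-- `Ω_ε = {x : dist(x,Ω) ≤ ε}`. -/
def Oeps (Ω : Set (EucN N)) (ε : ℝ) : Set (EucN N) := {x | Metric.infDist x Ω ≤ ε}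

/-- `Γ_ε = Ω_ε \ closure Ω`. -/
def Geps (Ω : Set (EucN N)) (ε : ℝ) : Set (EucN N) := Oeps Ω ε \ closure Ω

/-- a Borel control with values in the unit sphere -/
def IsControl (σ : EucN N → EucN N) : Prop := Measurable σ ∧ ∀ x, ‖σ x‖ = 1

/-- the transition probability measures `γ_σ[x]` -/
def gamKer (q ε : ℝ) (Ω : Set (EucN N)) (σ : EucN N → EucN N) (x : EucN N) :
    Measure (EucN N) :=
  if x ∈ closure Ω then
    ENNReal.ofReal q • ((volume (ball x ε))⁻¹ • volume.restrict (ball x ε)) +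
      ENNReal.ofReal ((1 - q) / 2) •
        (Measure.dirac (x + ε • σ x) + Measure.dirac (x - ε • σ x))
  else Measure.dirac x

/-- probability of the cylinder `{ω : ω i ∈ A i, i ≤ n}` for the chain started at `x`
with transitions `γ`. -/
def cylProb (γ : EucN N → Measure (EucN N)) : ℕ → EucN N → (ℕ → Set (EucN N)) → ℝ≥0∞
  | 0, x, A => (A 0).indicator 1 x
  | n + 1, x, A => (A 0).indicator 1 x * ∫⁻ y, cylProb γ n y (fun i => A (i + 1)) ∂(γ x)

/-- `P` is the trajectory (Ionescu-Tulcea/Kolmogorov) measure of the chain started at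
`x₀` with transition kernel `γ`. -/
def IsTrajMeasure (γ : EucN N → Measure (EucN N)) (x₀ : EucN N)
    (P : Measure (ℕ → EucN N)) : Prop :=
  IsProbabilityMeasure P ∧
    ∀ (n : ℕ) (A : ℕ → Set (EucN N)), (∀ i, MeasurableSet (A i)) →
      P {ω | ∀ i ≤ n, ω i ∈ A i} = cylProb γ n x₀ A

/-- the exit time `τ = min{n : ω n ∈ Γ}` as an extended nonnegative real (`∞` if the
trajectory never reaches `Γ`). -/
def exitTimeE (Γ : Set (EucN N)) (ω : ℕ → EucN N) : ℝ≥0∞ :=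
  ⨅ (n : ℕ) (_ : ω n ∈ Γ), (n : ℝ≥0∞)

open scoped RealInnerProductSpace

section BallMoments

variable {E : Type*} [NormedAddCommGroup E] [MeasurableSpace E] [BorelSpace E]
  (μ : Measure E) [μ.IsAddHaarMeasure]

theorem setIntegral_ball_eq_setIntegral_ball_zero (f : E → ℝ) (x : E) (r : ℝ) :
    ∫ y in ball x r, f y ∂μ = ∫ z in ball 0 r, f (x + z) ∂μ := by
  have h := (measurePreserving_add_left μ x).setIntegral_preimage_emb
    (measurableEmbedding_addLeft x) f (ball x r)
  rwa [preimage_add_ball, sub_self, eq_comm] at h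

variable [InnerProductSpace ℝ E] [FiniteDimensional ℝ E]

theorem setIntegral_ball_zero_inner (x : E) (r : ℝ) : ∫ z in ball 0 r, ⟪x, z⟫ ∂μ = 0 := by
  have h := (Measure.measurePreserving_neg μ).setIntegral_preimage_emb
    (Homeomorph.neg E).measurableEmbedding (fun z => ⟪x, z⟫) (ball 0 r)
  simp only [Set.neg_preimage, neg_ball, neg_zero, inner_neg_right, integral_neg] at h
  linarith

theorem integrableOn_ball_of_continuous {f : E → ℝ} (hf : Continuous f) (x : E) (r : ℝ) :
    IntegrableOn f (ball x r) μ :=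
  (hf.continuousOn.integrableOn_compact (isCompact_closedBall x r)).mono_set ball_subset_closedBall

variable [Nontrivial E]

theorem two_mul_measure_ball_half_le (x : E) {r : ℝ} (hr : 0 ≤ r) :
    2 * μ (ball x (r / 2)) ≤ μ (ball x r) := by
  have hd : 1 ≤ Module.finrank ℝ E := Module.finrank_pos
  rw [Measure.addHaar_ball μ x hr, Measure.addHaar_ball μ x (by positivity), ← mul_assoc,
    ← ENNReal.ofReal_ofNat 2, ← ENNReal.ofReal_mul zero_le_two]
  gcongr
  rw [div_pow, mul_div_assoc', div_le_iff₀ (by positivity)]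
  have : (2 : ℝ) ≤ 2 ^ Module.finrank ℝ E := le_self_pow₀ one_le_two (by omega)
  nlinarith [pow_nonneg hr (Module.finrank ℝ E)]

/-- Half of the ball `B_r` lies outside `B_{r/2}`, where `‖z‖² ≥ r²/4`. -/
theorem measureReal_ball_mul_le_setIntegral_norm_sq {r : ℝ} (hr : 0 ≤ r) :
    μ.real (ball (0 : E) r) * (r ^ 2 / 8) ≤ ∫ z in ball 0 r, ‖z‖ ^ 2 ∂μ := by
  set A := ball (0 : E) r \ ball 0 (r / 2)
  have hAB : A ⊆ ball 0 r := sdiff_subset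
  have hint := integrableOn_ball_of_continuous μ (continuous_norm.pow 2) (0 : E) r
  have hhalf : μ.real (ball (0 : E) r) / 2 ≤ μ.real A := by
    have h := ENNReal.toReal_mono measure_ball_lt_top.ne (two_mul_measure_ball_half_le μ 0 hr)
    rw [ENNReal.toReal_mul, ENNReal.toReal_ofNat] at h
    rw [measureReal_sdiff (ball_subset_ball (by linarith)) measurableSet_ball]
    simp only [measureReal_def]
    linarith
  have hA : ∀ z ∈ A, (r / 2) ^ 2 ≤ ‖z‖ ^ 2 := fun z hz => by
    have : r / 2 ≤ ‖z‖ := by simpa using hz.2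
    gcongr
  calc μ.real (ball (0 : E) r) * (r ^ 2 / 8) = (r / 2) ^ 2 * (μ.real (ball (0 : E) r) / 2) := by
        ring
    _ ≤ (r / 2) ^ 2 * μ.real A := by gcongr
    _ ≤ ∫ z in A, ‖z‖ ^ 2 ∂μ :=
        setIntegral_ge_of_const_le_real (measurableSet_ball.diff measurableSet_ball)
          (measure_ne_top_of_subset hAB measure_ball_lt_top.ne) hA (hint.mono_set hAB)
    _ ≤ ∫ z in ball 0 r, ‖z‖ ^ 2 ∂μ :=
        setIntegral_mono_set hint (ae_of_all _ fun z => by positivity) hAB.eventuallyLE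

theorem measureReal_ball_mul_le_setIntegral_norm_sq_center (x : E) {r : ℝ} (hr : 0 ≤ r) :
    μ.real (ball x r) * (‖x‖ ^ 2 + r ^ 2 / 8) ≤ ∫ y in ball x r, ‖y‖ ^ 2 ∂μ := by
  have hint (f : E → ℝ) (hf : Continuous f) := integrableOn_ball_of_continuous μ hf (0 : E) r
  rw [setIntegral_ball_eq_setIntegral_ball_zero, Measure.addHaar_real_ball_center]
  simp_rw [norm_add_sq_real]
  rw [integral_add (hint _ (by fun_prop)) (hint _ (by fun_prop)),
    integral_add (hint _ (by fun_prop)) (hint _ (by fun_prop)), integral_const_mul,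
    setIntegral_ball_zero_inner, setIntegral_const, smul_eq_mul]
  linarith [measureReal_ball_mul_le_setIntegral_norm_sq μ (E := E) hr]

theorem setLIntegral_ball_ofReal_sub_norm_sq_le {x : E} {r M : ℝ} (hr : 0 ≤ r)
    (hM : ∀ y ∈ ball x r, ‖y‖ ^ 2 ≤ M) :
    ∫⁻ y in ball x r, ENNReal.ofReal (M - ‖y‖ ^ 2) ∂μ
      ≤ μ (ball x r) * ENNReal.ofReal (M - ‖x‖ ^ 2 - r ^ 2 / 8) := by
  have hint := integrableOn_ball_of_continuous μ (f := fun y => M - ‖y‖ ^ 2) (by fun_prop) x r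
  have hnonneg : 0 ≤ᵐ[μ.restrict (ball x r)] fun y => M - ‖y‖ ^ 2 :=
    (ae_restrict_iff' measurableSet_ball).2 (ae_of_all _ fun y hy => sub_nonneg.2 (hM y hy))
  rw [← ofReal_integral_eq_lintegral_ofReal hint hnonneg,
    ← ENNReal.ofReal_toReal measure_ball_lt_top.ne, ← ENNReal.ofReal_mul ENNReal.toReal_nonneg]
  refine ENNReal.ofReal_le_ofReal ?_
  have hconst : IntegrableOn (fun _ => M) (ball x r) μ := integrableOn_const measure_ball_lt_top.ne
  rw [integral_sub hconst (integrableOn_ball_of_continuous μ (by fun_prop) x r),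
    setIntegral_const, smul_eq_mul, ← measureReal_def]
  linarith [measureReal_ball_mul_le_setIntegral_norm_sq_center μ x hr]

theorem inv_measure_ball_mul_setLIntegral_ofReal_sub_norm_sq_le {x : E} {r M : ℝ} (hr : 0 < r)
    (hM : ∀ y ∈ ball x r, ‖y‖ ^ 2 ≤ M) :
    (μ (ball x r))⁻¹ * ∫⁻ y in ball x r, ENNReal.ofReal (M - ‖y‖ ^ 2) ∂μ
      ≤ ENNReal.ofReal (M - ‖x‖ ^ 2 - r ^ 2 / 8) :=
  calc _ ≤ (μ (ball x r))⁻¹ * (μ (ball x r) * ENNReal.ofReal (M - ‖x‖ ^ 2 - r ^ 2 / 8)) := by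
        gcongr; exact setLIntegral_ball_ofReal_sub_norm_sq_le μ hr.le hM
    _ = _ := ENNReal.inv_mul_cancel_left (measure_ball_pos μ x hr).ne' measure_ball_lt_top.ne

end BallMoments

theorem sum_lintegral_le_lintegral_sum {α ι : Type*} [MeasurableSpace α] {μ : Measure α}
    (s : Finset ι) (f : ι → α → ℝ≥0∞) :
    ∑ i ∈ s, ∫⁻ a, f i a ∂μ ≤ ∫⁻ a, ∑ i ∈ s, f i a ∂μ := by
  induction s using Finset.induction_on with
  | empty => simp
  | insert i s hi ih =>
    simp only [Finset.sum_insert hi]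
    exact (add_le_add_right ih _).trans (le_lintegral_add _ _)

section Chain

variable {γ : EucN N → Measure (EucN N)} {Γ : Set (EucN N)}

/-- `P^x(τ > n)`: the probability of the cylinder on which the chain avoids `Γ` at times
`0, …, n`. -/
def survivalProb (γ : EucN N → Measure (EucN N)) (Γ : Set (EucN N)) (n : ℕ) (x : EucN N) :
    ℝ≥0∞ :=
  cylProb γ n x fun _ => Γᶜ

theorem survivalProb_of_mem {x : EucN N} (hx : x ∈ Γ) (n : ℕ) : survivalProb γ Γ n x = 0 := by
  cases n <;> simp [survivalProb, cylProb, hx]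

theorem survivalProb_zero_of_notMem {x : EucN N} (hx : x ∉ Γ) : survivalProb γ Γ 0 x = 1 := by
  simp [survivalProb, cylProb, hx]

theorem survivalProb_succ_of_notMem {x : EucN N} (hx : x ∉ Γ) (n : ℕ) :
    survivalProb γ Γ (n + 1) x = ∫⁻ y, survivalProb γ Γ n y ∂(γ x) := by
  simp [survivalProb, cylProb, hx]

theorem sum_survivalProb_le_of_drift {S : Set (EucN N)} {φ : EucN N → ℝ≥0∞}
    (hstay : ∀ x ∈ S \ Γ, ∀ᵐ y ∂(γ x), y ∈ S)
    (hdrift : ∀ x ∈ S \ Γ, 1 + ∫⁻ y, φ y ∂(γ x) ≤ φ x) (n : ℕ) :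
    ∀ x ∈ S, ∑ k ∈ Finset.range n, survivalProb γ Γ k x ≤ φ x := by
  induction n with
  | zero => simp
  | succ n ih =>
    intro x hxS
    by_cases hxΓ : x ∈ Γ
    · simp [survivalProb_of_mem hxΓ]
    have hx : x ∈ S \ Γ := ⟨hxS, hxΓ⟩
    calc ∑ k ∈ Finset.range (n + 1), survivalProb γ Γ k x
        = 1 + ∑ k ∈ Finset.range n, ∫⁻ y, survivalProb γ Γ k y ∂(γ x) := by
          simp only [Finset.sum_range_succ', survivalProb_zero_of_notMem hxΓ,
            survivalProb_succ_of_notMem hxΓ, add_comm]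
      _ ≤ 1 + ∫⁻ y, ∑ k ∈ Finset.range n, survivalProb γ Γ k y ∂(γ x) := by
          gcongr; exact sum_lintegral_le_lintegral_sum _ _
      _ ≤ 1 + ∫⁻ y, φ y ∂(γ x) := by
          gcongr 1 + ?_
          exact lintegral_mono_ae ((hstay x hx).mono ih)
      _ ≤ φ x := hdrift x hx

theorem tsum_survivalProb_le_of_drift {S : Set (EucN N)} {φ : EucN N → ℝ≥0∞}
    (hstay : ∀ x ∈ S \ Γ, ∀ᵐ y ∂(γ x), y ∈ S)
    (hdrift : ∀ x ∈ S \ Γ, 1 + ∫⁻ y, φ y ∂(γ x) ≤ φ x) {x : EucN N} (hx : x ∈ S) :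
    ∑' n, survivalProb γ Γ n x ≤ φ x :=
  ENNReal.tsum_le_of_sum_range_le fun n => sum_survivalProb_le_of_drift hstay hdrift n x hx

end Chain

section ExitTime

variable {Γ : Set (EucN N)}

theorem exitTimeE_eq_tsum_indicator (ω : ℕ → EucN N) :
    exitTimeE Γ ω = ∑' n, {ω' : ℕ → EucN N | ∀ i ≤ n, ω' i ∈ Γᶜ}.indicator 1 ω := by
  by_cases h : ∃ m, ω m ∈ Γ
  · have hτ : exitTimeE Γ ω = Nat.find h := by
      unfold exitTimeE
      exact le_antisymm (iInf_le_of_le (Nat.find h) (iInf_le _ (Nat.find_spec h)))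
        (le_iInf₂ fun m hm => Nat.cast_le.2 (Nat.find_min' h hm))
    have hset : ∀ n, (∀ i ≤ n, ω i ∈ Γᶜ) ↔ n ∈ Finset.range (Nat.find h) := by
      simp [Nat.lt_find_iff]
    simp only [indicator, mem_ofPred_eq, hset, Pi.one_apply]
    rw [hτ, tsum_eq_sum (s := Finset.range (Nat.find h)) (fun n hn => if_neg hn),
      Finset.sum_ite_mem, Finset.inter_self]
    simp
  · push Not at h
    simp [exitTimeE, h, indicator]

theorem measurableSet_setOf_forall_le_mem_compl (hΓ : MeasurableSet Γ) (n : ℕ) :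
    MeasurableSet {ω : ℕ → EucN N | ∀ i ≤ n, ω i ∈ Γᶜ} := by
  measurability

theorem measurable_exitTimeE (hΓ : MeasurableSet Γ) : Measurable (exitTimeE Γ) := by
  rw [funext exitTimeE_eq_tsum_indicator]
  exact Measurable.tsum fun n =>
    measurable_one.indicator (measurableSet_setOf_forall_le_mem_compl hΓ n)

theorem IsTrajMeasure.lintegral_exitTimeE {γ : EucN N → Measure (EucN N)} {x₀ : EucN N}
    {P : Measure (ℕ → EucN N)} (hP : IsTrajMeasure γ x₀ P) (hΓ : MeasurableSet Γ) :
    ∫⁻ ω, exitTimeE Γ ω ∂P = ∑' n, survivalProb γ Γ n x₀ := by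
  have hcyl := measurableSet_setOf_forall_le_mem_compl hΓ
  simp_rw [exitTimeE_eq_tsum_indicator]
  rw [lintegral_tsum fun n => (measurable_one.indicator (hcyl n)).aemeasurable]
  refine tsum_congr fun n => ?_
  rw [lintegral_indicator_one (hcyl n), hP.2 n _ fun _ => hΓ.compl, survivalProb]

theorem measure_exitTimeE_lt_top {P : Measure (ℕ → EucN N)} [IsProbabilityMeasure P]
    (hΓ : MeasurableSet Γ) (hfin : ∫⁻ ω, exitTimeE Γ ω ∂P ≠ ⊤) :
    P {ω | exitTimeE Γ ω < ⊤} = 1 := by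
  have hτ := measurable_exitTimeE hΓ
  rw [← measure_univ (μ := P)]
  exact (ae_iff_measure_eq (measurableSet_lt hτ measurable_const).nullMeasurableSet).1
    (ae_lt_top hτ hfin)

end ExitTime

section Geometry

variable {Ω : Set (EucN N)} {ε : ℝ}

theorem closedBall_subset_Oeps {x : EucN N} (hx : x ∈ closure Ω) : closedBall x ε ⊆ Oeps Ω ε :=
  fun y hy => by
    have h := infDist_le_infDist_add_dist (x := y) (y := x) (s := Ω)
    rw [infDist_zero_of_mem_closure hx, zero_add] at h
    exact h.trans hy

theorem Oeps_diff_Geps_subset_closure : Oeps Ω ε \ Geps Ω ε ⊆ closure Ω :=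
  fun _ ⟨hO, hG⟩ => by_contra fun hc => hG ⟨hO, hc⟩

theorem measurableSet_Geps : MeasurableSet (Geps Ω ε) :=
  (isClosed_le (continuous_infDist_pt Ω) continuous_const).measurableSet.diff
    isClosed_closure.measurableSet

end Geometry

section Kernel

variable {q ε : ℝ} {Ω : Set (EucN N)} {σ : EucN N → EucN N} {x : EucN N}

theorem lintegral_gamKer (hx : x ∈ closure Ω) (f : EucN N → ℝ≥0∞) :
    ∫⁻ y, f y ∂(gamKer q ε Ω σ x)
      = ENNReal.ofReal q * ((volume (ball x ε))⁻¹ * ∫⁻ y in ball x ε, f y)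
        + ENNReal.ofReal ((1 - q) / 2) * (f (x + ε • σ x) + f (x - ε • σ x)) := by
  simp [gamKer, hx, lintegral_add_measure, lintegral_smul_measure, lintegral_dirac, mul_add]

theorem ae_gamKer_mem_closedBall (hε : 0 ≤ ε) (hx : x ∈ closure Ω) (hσx : ‖σ x‖ = 1) :
    ∀ᵐ y ∂(gamKer q ε Ω σ x), y ∈ closedBall x ε := by
  have hjump : ‖ε • σ x‖ = ε := by rw [norm_smul, hσx, Real.norm_of_nonneg hε, mul_one]
  have hmeas : MeasurableSet (closedBall x ε)ᶜ := measurableSet_closedBall.compl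
  have hplus : x + ε • σ x ∈ closedBall x ε := by simp [hjump]
  have hminus : x - ε • σ x ∈ closedBall x ε := by simp [hjump]
  have hdisj : (closedBall x ε)ᶜ ∩ ball x ε = ∅ :=
    (disjoint_compl_left.mono_right ball_subset_closedBall).inter_eq
  rw [ae_iff, ← compl_def]
  simp only [gamKer, if_pos hx, Measure.add_apply, Measure.smul_apply,
    Measure.restrict_apply hmeas, hdisj, measure_empty, Measure.dirac_apply' _ hmeas,
    indicator_of_notMem (notMem_compl_iff.2 hplus),
    indicator_of_notMem (notMem_compl_iff.2 hminus)]
  simp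

theorem lintegral_gamKer_ofReal_sub_norm_sq_add_le [Nontrivial (EucN N)] {M : ℝ} (hq0 : 0 ≤ q)
    (hq1 : q ≤ 1) (hε : 0 < ε) (hx : x ∈ closure Ω) (hσx : ‖σ x‖ = 1)
    (hM : ∀ y ∈ closedBall x ε, ‖y‖ ^ 2 ≤ M) :
    ∫⁻ y, ENNReal.ofReal (M - ‖y‖ ^ 2) ∂(gamKer q ε Ω σ x) + ENNReal.ofReal (ε ^ 2 / 8)
      ≤ ENNReal.ofReal (M - ‖x‖ ^ 2) := by
  have hball := inv_measure_ball_mul_setLIntegral_ofReal_sub_norm_sq_le volume hε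
    fun y hy => hM y (ball_subset_closedBall hy)
  have hjump : ‖ε • σ x‖ = ε := by rw [norm_smul, hσx, Real.norm_of_nonneg hε.le, mul_one]
  have hplus := hM (x + ε • σ x) (by simp [hjump])
  have hminus := hM (x - ε • σ x) (by simp [hjump])
  have hpar : ‖x + ε • σ x‖ ^ 2 + ‖x - ε • σ x‖ ^ 2 = 2 * ‖x‖ ^ 2 + 2 * ε ^ 2 := by
    rw [norm_add_sq_real, norm_sub_sq_real, hjump]; ring
  have hjumps : ENNReal.ofReal (M - ‖x + ε • σ x‖ ^ 2) + ENNReal.ofReal (M - ‖x - ε • σ x‖ ^ 2)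
      = ENNReal.ofReal (2 * (M - ‖x‖ ^ 2 - ε ^ 2)) := by
    rw [← ENNReal.ofReal_add (sub_nonneg.2 hplus) (sub_nonneg.2 hminus)]
    congr 1; linarith
  have hball_nonneg : 0 ≤ q * (M - ‖x‖ ^ 2 - ε ^ 2 / 8) :=
    mul_nonneg hq0 (by linarith [sq_nonneg ε])
  have hjump_nonneg : 0 ≤ (1 - q) / 2 * (2 * (M - ‖x‖ ^ 2 - ε ^ 2)) :=
    mul_nonneg (by linarith) (by linarith)
  rw [lintegral_gamKer hx, hjumps]
  calc _ ≤ ENNReal.ofReal q * ENNReal.ofReal (M - ‖x‖ ^ 2 - ε ^ 2 / 8)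
        + ENNReal.ofReal ((1 - q) / 2) * ENNReal.ofReal (2 * (M - ‖x‖ ^ 2 - ε ^ 2))
        + ENNReal.ofReal (ε ^ 2 / 8) := by gcongr
    _ = ENNReal.ofReal (q * (M - ‖x‖ ^ 2 - ε ^ 2 / 8)
        + (1 - q) / 2 * (2 * (M - ‖x‖ ^ 2 - ε ^ 2)) + ε ^ 2 / 8) := by
      rw [← ENNReal.ofReal_mul hq0, ← ENNReal.ofReal_mul (by linarith),
        ← ENNReal.ofReal_add hball_nonneg hjump_nonneg,
        ← ENNReal.ofReal_add (add_nonneg hball_nonneg hjump_nonneg) (by positivity)]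
    _ ≤ ENNReal.ofReal (M - ‖x‖ ^ 2) :=
      ENNReal.ofReal_le_ofReal (by nlinarith [mul_nonneg (sub_nonneg.2 hq1) (sq_nonneg ε)])

theorem one_add_lintegral_gamKer_le [Nontrivial (EucN N)] {M : ℝ} (hq0 : 0 ≤ q) (hq1 : q ≤ 1)
    (hε : 0 < ε) (hx : x ∈ closure Ω) (hσx : ‖σ x‖ = 1)
    (hM : ∀ y ∈ closedBall x ε, ‖y‖ ^ 2 ≤ M) :
    1 + ∫⁻ y, ENNReal.ofReal (8 / ε ^ 2) * ENNReal.ofReal (M - ‖y‖ ^ 2) ∂(gamKer q ε Ω σ x)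
      ≤ ENNReal.ofReal (8 / ε ^ 2) * ENNReal.ofReal (M - ‖x‖ ^ 2) := by
  have hscale : ENNReal.ofReal (8 / ε ^ 2) * ENNReal.ofReal (ε ^ 2 / 8) = 1 := by
    rw [← ENNReal.ofReal_mul (by positivity), div_mul_div_cancel₀ (by positivity),
      div_self (by positivity), ENNReal.ofReal_one]
  rw [lintegral_const_mul' _ _ ENNReal.ofReal_ne_top]
  calc _ = ENNReal.ofReal (8 / ε ^ 2) * (∫⁻ y, ENNReal.ofReal (M - ‖y‖ ^ 2) ∂(gamKer q ε Ω σ x)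
        + ENNReal.ofReal (ε ^ 2 / 8)) := by rw [mul_add, hscale, add_comm]
    _ ≤ _ := by gcongr; exact lintegral_gamKer_ofReal_sub_norm_sq_add_le hq0 hq1 hε hx hσx hM

theorem tsum_survivalProb_gamKer_le [Nontrivial (EucN N)] {M : ℝ} (hq0 : 0 ≤ q) (hq1 : q ≤ 1)
    (hε : 0 < ε) (hσ : ∀ x, ‖σ x‖ = 1)
    (hM : ∀ x ∈ closure Ω, ∀ y ∈ closedBall x ε, ‖y‖ ^ 2 ≤ M) {x₀ : EucN N}
    (hx₀ : x₀ ∈ Oeps Ω ε) :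
    ∑' n, survivalProb (gamKer q ε Ω σ) (Geps Ω ε) n x₀
      ≤ ENNReal.ofReal (8 / ε ^ 2) * ENNReal.ofReal (M - ‖x₀‖ ^ 2) := by
  refine tsum_survivalProb_le_of_drift
    (φ := fun y => ENNReal.ofReal (8 / ε ^ 2) * ENNReal.ofReal (M - ‖y‖ ^ 2))
    (fun x hx => ?_) (fun x hx => ?_) hx₀
  · have hxΩ := Oeps_diff_Geps_subset_closure hx
    exact (ae_gamKer_mem_closedBall hε.le hxΩ (hσ x)).mono fun y hy =>
      closedBall_subset_Oeps hxΩ hy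
  · have hxΩ := Oeps_diff_Geps_subset_closure hx
    exact one_add_lintegral_gamKer_le hq0 hq1 hε hxΩ (hσ x) (hM x hxΩ)

end Kernel

theorem exit_time_bound_general (hN : 2 ≤ N)
    (Ω : Set (EucN N)) (hΩb : Bornology.IsBounded Ω) :
    ∃ C : ℝ, ∀ ε : ℝ, 0 < ε → ε ≤ 1 → ∀ p : ℝ, 2 ≤ p →
      ∀ σ : EucN N → EucN N, IsControl σ → ∀ x₀ ∈ Oeps Ω ε,
        ∀ P : Measure (ℕ → EucN N),
          IsTrajMeasure (gamKer (((N : ℝ) + 2) / ((N : ℝ) + p)) ε Ω σ) x₀ P →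
          ENNReal.ofReal (ε ^ 2) * (∫⁻ ω, exitTimeE (Geps Ω ε) ω ∂P)
              ≤ ENNReal.ofReal C ∧
            P {ω | exitTimeE (Geps Ω ε) ω < ⊤} = 1 := by
  obtain ⟨R, hR⟩ := hΩb.closure.subset_closedBall 0
  refine ⟨8 * (R + 1) ^ 2, fun ε hε hε1 p hp σ hσ x₀ hx₀ P hP => ?_⟩
  have : Nontrivial (EucN N) :=
    Module.nontrivial_of_finrank_pos (R := ℝ) (by rw [finrank_euclideanSpace_fin]; omega)
  have hq0 : 0 ≤ ((N : ℝ) + 2) / ((N : ℝ) + p) := by positivity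
  have hq1 : ((N : ℝ) + 2) / ((N : ℝ) + p) ≤ 1 := div_le_one_of_le₀ (by linarith) (by positivity)
  have hM : ∀ x ∈ closure Ω, ∀ y ∈ closedBall x ε, ‖y‖ ^ 2 ≤ (R + 1) ^ 2 := fun x hx y hy => by
    have hxR : ‖x‖ ≤ R := by simpa using hR hx
    have hyx : ‖y - x‖ ≤ ε := by simpa [dist_eq_norm] using hy
    have hy : ‖y‖ ≤ R + 1 := by linarith [norm_le_norm_add_norm_sub' y x]
    exact pow_le_pow_left₀ (norm_nonneg y) hy 2
  have hexp : ∫⁻ ω, exitTimeE (Geps Ω ε) ω ∂P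
      ≤ ENNReal.ofReal (8 / ε ^ 2) * ENNReal.ofReal ((R + 1) ^ 2 - ‖x₀‖ ^ 2) := by
    rw [hP.lintegral_exitTimeE measurableSet_Geps]
    exact tsum_survivalProb_gamKer_le hq0 hq1 hε hσ.2 hM hx₀
  have : IsProbabilityMeasure P := hP.1
  refine ⟨?_, measure_exitTimeE_lt_top measurableSet_Geps (hexp.trans_lt (by finiteness)).ne⟩
  calc _ ≤ ENNReal.ofReal (ε ^ 2) *
        (ENNReal.ofReal (8 / ε ^ 2) * ENNReal.ofReal ((R + 1) ^ 2 - ‖x₀‖ ^ 2)) := by gcongr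
    _ = ENNReal.ofReal (8 * ((R + 1) ^ 2 - ‖x₀‖ ^ 2)) := by
      rw [← mul_assoc, ← ENNReal.ofReal_mul (by positivity), mul_div_cancel₀ _ (by positivity),
        ← ENNReal.ofReal_mul (by norm_num)]
    _ ≤ ENNReal.ofReal (8 * (R + 1) ^ 2) :=
      ENNReal.ofReal_le_ofReal (by nlinarith [norm_nonneg x₀])

/-- there is a constant `C = C(N,Ω)` with `ε² E^{x₀}_σ[τ_σ] ≤ C` for all
`ε ∈ (0,1]`, all `p ∈ [2,∞)`, all Borel controls `σ` and all starting points
`x₀ ∈ Ω_ε`; in particular the process exits into `Γ_ε` almost surely. -/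
theorem exit_time_bound (hN : 2 ≤ N)
    (Ω : Set (EucN N)) (hΩo : IsOpen Ω) (hΩb : Bornology.IsBounded Ω) :
    ∃ C : ℝ, ∀ ε : ℝ, 0 < ε → ε ≤ 1 → ∀ p : ℝ, 2 ≤ p →
      ∀ σ : EucN N → EucN N, IsControl σ → ∀ x₀ ∈ Oeps Ω ε,
        ∀ P : Measure (ℕ → EucN N),
          IsTrajMeasure (gamKer (((N : ℝ) + 2) / ((N : ℝ) + p)) ε Ω σ) x₀ P →
          ENNReal.ofReal (ε ^ 2) * (∫⁻ ω, exitTimeE (Geps Ω ε) ω ∂P)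
              ≤ ENNReal.ofReal C ∧
            P {ω | exitTimeE (Geps Ω ε) ω < ⊤} = 1 :=
  exit_time_bound_general hN Ω hΩb

end
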